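/- Let N be a Binomial(n, q) random variable with n ≥ 1 and q ∈ (0,1), conditioned implicitly to be at least 1 via the bound N ∨ 1. Then for every r > 0, E[(N ∨ 1)^{-r}] ≤ exp(−3nq/32) + (nq/2)^{-r}, where the first term bounds the probability that |N/n − q| > q/2 via Bernstein's inequality. -/

import Mathlib

open MeasureTheory ProbabilityTheory Finset Classical
noncomputable section

/-!
Split the expectation on the event `N ≤ nq/2`: there `(N ∨ 1)^{-r} ≤ 1`, and off it
`(N ∨ 1)^{-r} ≤ (nq/2)^{-r}`. The lower tail is controlled by a Chernoff bound at `t = -1/2`: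
the moment generating function of a sum of independent indicators with total mean `m` is at most
`exp ((e^t - 1) m)`, and `e^{-1/2} ≤ 21/32` turns `m/4 + (e^{-1/2} - 1) m` into `-3m/32`.
-/

open Real

lemma exp_neg_half_le : exp (-(1 / 2)) ≤ 21 / 32 := by
  have hsq : exp (-(1 / 2)) ^ 2 = exp (-1) := by rw [← exp_nat_mul]; norm_num
  nlinarith [exp_neg_one_lt_d9, exp_pos (-(1 / 2))]

lemma exp_mul_indicator_one {Ω : Type*} (s : Set Ω) (t : ℝ) (ω : Ω) :
    exp (t * s.indicator 1 ω) = 1 + s.indicator (fun _ => exp t - 1) ω := by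
  by_cases h : ω ∈ s <;> simp [h]

namespace ProbabilityTheory

variable {Ω : Type*} [MeasurableSpace Ω] {μ : Measure Ω}

lemma integrable_exp_mul_indicator_one [IsFiniteMeasure μ] {s : Set Ω} (hs : MeasurableSet s)
    (t : ℝ) : Integrable (fun ω => exp (t * s.indicator 1 ω)) μ := by
  simp_rw [exp_mul_indicator_one]
  exact (integrable_const 1).add ((integrable_const _).indicator hs)

lemma mgf_indicator_one [IsProbabilityMeasure μ] {s : Set Ω} (hs : MeasurableSet s) (t : ℝ) :
    mgf (s.indicator 1) μ t = 1 + (exp t - 1) * μ.real s := by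
  simp_rw [mgf, exp_mul_indicator_one]
  rw [integral_add (integrable_const 1) ((integrable_const _).indicator hs),
    integral_indicator_const _ hs]
  simp [mul_comm]

lemma mgf_indicator_one_le [IsProbabilityMeasure μ] {s : Set Ω} (hs : MeasurableSet s) (t : ℝ) :
    mgf (s.indicator 1) μ t ≤ exp ((exp t - 1) * μ.real s) := by
  rw [mgf_indicator_one hs, add_comm]
  exact add_one_le_exp _

variable [IsProbabilityMeasure μ] {ι : Type*} [Fintype ι] {A : ι → Set Ω}

lemma iIndepSet.mgf_sum_indicator_one_le (hmeas : ∀ i, MeasurableSet (A i))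
    (hindep : iIndepSet A μ) (t : ℝ) :
    mgf (∑ i, (A i).indicator 1) μ t ≤ exp ((exp t - 1) * ∑ i, μ.real (A i)) := by
  have hX : iIndepFun (fun i => (A i).indicator (1 : Ω → ℝ)) μ := hindep.iIndepFun_indicator
  rw [hX.mgf_sum (fun i => measurable_const.indicator (hmeas i)), mul_sum, exp_sum]
  exact prod_le_prod (fun i _ => mgf_nonneg) fun i _ => mgf_indicator_one_le (hmeas i) t

theorem iIndepSet.measureReal_sum_indicator_one_le_half_le (hmeas : ∀ i, MeasurableSet (A i))
    (hindep : iIndepSet A μ) :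
    μ.real {ω | (∑ i, (A i).indicator 1 : Ω → ℝ) ω ≤ (∑ i, μ.real (A i)) / 2} ≤
      exp (-(3 / 32 * ∑ i, μ.real (A i))) := by
  set m := ∑ i, μ.real (A i)
  have hm : 0 ≤ m := sum_nonneg fun i _ => measureReal_nonneg
  have hint : Integrable (fun ω => exp (-(1 / 2) * (∑ i, (A i).indicator 1 : Ω → ℝ) ω)) μ := by
    have hX : iIndepFun (fun i => (A i).indicator (1 : Ω → ℝ)) μ := hindep.iIndepFun_indicator
    simpa using hX.integrable_exp_mul_sum (t := -(1 / 2))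
      (fun i => measurable_const.indicator (hmeas i))
      (fun i _ => integrable_exp_mul_indicator_one (hmeas i) _) (s := univ)
  calc _ ≤ exp (-(-(1 / 2)) * (m / 2)) * mgf (∑ i, (A i).indicator 1) μ (-(1 / 2)) :=
        measure_le_le_exp_mul_mgf _ (by norm_num) hint
    _ ≤ exp (m / 4) * exp ((exp (-(1 / 2)) - 1) * m) := by
        rw [show -(-(1 / 2 : ℝ)) * (m / 2) = m / 4 by ring]
        gcongr
        exact hindep.mgf_sum_indicator_one_le hmeas _
    _ ≤ exp (-(3 / 32 * m)) := by
        rw [← exp_add]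
        exact exp_le_exp.2 (by nlinarith [exp_neg_half_le])

end ProbabilityTheory

lemma integral_rpow_neg_max_one_le {Ω : Type*} [MeasurableSpace Ω] {μ : Measure Ω}
    [IsProbabilityMeasure μ] {X : Ω → ℝ} (hX : Measurable X) {a r : ℝ} (ha : 0 < a)
    (hr : 0 ≤ r) :
    ∫ ω, max (X ω) 1 ^ (-r) ∂μ ≤ μ.real {ω | X ω ≤ a} + a ^ (-r) := by
  have hle_one : ∀ ω, max (X ω) 1 ^ (-r) ≤ 1 := fun ω =>
    rpow_le_one_of_one_le_of_nonpos (le_max_right _ _) (by linarith)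
  have hB : MeasurableSet {ω | X ω ≤ a} := measurableSet_le hX measurable_const
  have hpointwise : ∀ ω, max (X ω) 1 ^ (-r) ≤ {ω | X ω ≤ a}.indicator 1 ω + a ^ (-r) := by
    intro ω
    by_cases h : X ω ≤ a
    · simp only [Set.indicator_of_mem (show ω ∈ {ω | X ω ≤ a} from h), Pi.one_apply]
      linarith [hle_one ω, rpow_nonneg ha.le (-r)]
    · rw [Set.indicator_of_notMem (show ω ∉ {ω | X ω ≤ a} from h), zero_add]
      exact rpow_le_rpow_of_nonpos ha ((not_le.1 h).le.trans (le_max_left _ _)) (by linarith)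
  have hint : Integrable (fun ω => max (X ω) 1 ^ (-r)) μ := by
    refine .of_bound ((hX.max measurable_const).pow_const _).aestronglyMeasurable 1
      (ae_of_all _ fun ω => ?_)
    rw [norm_of_nonneg (rpow_nonneg (by positivity) _)]
    exact hle_one ω
  calc _ ≤ ∫ ω, ({ω | X ω ≤ a}.indicator 1 ω + a ^ (-r)) ∂μ :=
        integral_mono hint (((integrable_const 1).indicator hB).add (integrable_const _))
          hpointwise
    _ = _ := by
        rw [integral_add ((integrable_const 1).indicator hB) (integrable_const _),
          integral_indicator_one hB]
        simp

theorem binomial_inverse_moment_general {Ω : Type*} [MeasurableSpace Ω] (μ : Measure Ω)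
    [IsProbabilityMeasure μ] (n : ℕ) (hn : 1 ≤ n) (q : ℝ) (hq : 0 < q)
    (A : Fin n → Set Ω) (hmeas : ∀ i, MeasurableSet (A i))
    (hindep : iIndepSet A μ)
    (hq' : ∀ i, μ (A i) = ENNReal.ofReal q)
    (N : Ω → ℕ) (hN : ∀ ω, N ω = (Finset.univ.filter fun i => ω ∈ A i).card)
    (r : ℝ) (hr : 0 < r) :
    ∫ ω, ((max (N ω) 1 : ℕ) : ℝ) ^ (-r) ∂μ ≤
      Real.exp (-(3 * n * q) / 32) + (n * q / 2) ^ (-r) := by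
  set S : Ω → ℝ := ∑ i, (A i).indicator 1
  have hNS : ∀ ω, (N ω : ℝ) = S ω := fun ω => by simp [S, hN, Set.indicator_apply]
  have hS : Measurable S := by fun_prop (disch := exact hmeas _)
  have hmean : ∑ i, μ.real (A i) = n * q := by
    simp [Measure.real, hq', hq.le]
  have hnq : 0 < n * q / 2 := div_pos (mul_pos (Nat.cast_pos.2 hn) hq) two_pos
  calc _ = ∫ ω, max (S ω) 1 ^ (-r) ∂μ := by simp_rw [Nat.cast_max, hNS, Nat.cast_one]
    _ ≤ μ.real {ω | S ω ≤ n * q / 2} + (n * q / 2) ^ (-r) :=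
        integral_rpow_neg_max_one_le hS hnq hr.le
    _ ≤ exp (-(3 / 32 * (n * q))) + (n * q / 2) ^ (-r) := by
        gcongr
        simpa only [hmean] using hindep.measureReal_sum_indicator_one_le_half_le hmeas
    _ = _ := by ring_nf

/-- For `N = ∑_{i=1}^n 1_{A_i}` a Binomial(n,q) count (the `A_i` independent events of
probability `q`), for every `r > 0`,
`E[(N ∨ 1)^{-r}] ≤ exp(−3nq/32) + (nq/2)^{-r}`. -/
theorem binomial_inverse_moment {Ω : Type*} [MeasurableSpace Ω] (μ : Measure Ω)
    [IsProbabilityMeasure μ] (n : ℕ) (hn : 1 ≤ n) (q : ℝ) (hq : 0 < q) (hq1 : q < 1)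
    (A : Fin n → Set Ω) (hmeas : ∀ i, MeasurableSet (A i))
    (hindep : iIndepSet A μ)
    (hq' : ∀ i, μ (A i) = ENNReal.ofReal q)
    (N : Ω → ℕ) (hN : ∀ ω, N ω = (Finset.univ.filter fun i => ω ∈ A i).card)
    (r : ℝ) (hr : 0 < r) :
    ∫ ω, ((max (N ω) 1 : ℕ) : ℝ) ^ (-r) ∂μ ≤
      Real.exp (-(3 * n * q) / 32) + (n * q / 2) ^ (-r) :=
  binomial_inverse_moment_general μ n hn q hq A hmeas hindep hq' N hN r hr
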